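/- arXiv:1402.5185 — 3 statements merged into one kernel-verified Lean document; each statement's English description precedes it below -/
import Mathlib

section
/- Let q ≥ 0. For every φ ∈ L¹(ℝ), the functions 𝓛₊[φ] and 𝓛₋[φ] are integrable on ℝ and satisfy ‖𝓛₊[φ]‖_{L¹} ≤ 2‖φ‖_{L¹} and ‖𝓛₋[φ]‖_{L¹} ≤ 2‖φ‖_{L¹}. -/
open Complex MeasureTheory

/-- The operator `𝓛₊[φ](x) = φ(x) − q·1₋(x) e^{qx} ∫_x^{−x} e^{q|y|} φ(y) dy`. -/
noncomputable def Lplus (q : ℝ) (φ : ℝ → ℂ) (x : ℝ) : ℂ :=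
  φ x - (if x < 0 then (1 : ℂ) else 0) * q * Real.exp (q * x) *
    ∫ y in x..(-x), (Real.exp (q * |y|) : ℂ) * φ y

/-- The operator `𝓛₋[φ](x) = φ(x) − q·1₊(x) e^{−qx} ∫_{−x}^{x} e^{q|y|} φ(y) dy`. -/
noncomputable def Lminus (q : ℝ) (φ : ℝ → ℂ) (x : ℝ) : ℂ :=
  φ x - (if 0 ≤ x then (1 : ℂ) else 0) * q * Real.exp (-(q * x)) *
    ∫ y in (-x)..x, (Real.exp (q * |y|) : ℂ) * φ y

/-!
Write `𝓛₊[φ] = φ - C₊[φ]`. The correction is `C₊[φ](x) = ∫ K(x, y) dy` for the kernel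
`K(x, y) = 1{|y| < -x} q e^{qx} e^{q|y|} φ(y)`, and for fixed `y` one has
`∫ q e^{qx} dx = e^{-q|y|}` over `x < -|y|`, so `∫∫ |K| = ‖φ‖₁` by Tonelli and hence
`‖C₊[φ]‖₁ ≤ ‖φ‖₁`. The `𝓛₋` correction is that of `𝓛₊` for `φ(-·)`, reflected. The triangle
inequality gives the factor `2`.
-/

open Set

section Fubini

variable {α β E : Type*} [MeasurableSpace α] [MeasurableSpace β] {μ : Measure α} {ν : Measure β}
  [SFinite μ] [SFinite ν] [NormedAddCommGroup E] [NormedSpace ℝ E]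

theorem integral_norm_integral_le_integral_integral_norm {f : α × β → E}
    (hf : Integrable f (μ.prod ν)) :
    ∫ x, ‖∫ y, f (x, y) ∂ν‖ ∂μ ≤ ∫ y, ∫ x, ‖f (x, y)‖ ∂μ ∂ν :=
  (integral_mono hf.integral_prod_left.norm hf.integral_norm_prod_left
    fun _ => norm_integral_le_integral_norm _).trans_eq (integral_integral_swap hf.norm)

end Fubini

theorem integral_norm_sub_le_two_mul {α E : Type*} [MeasurableSpace α] {μ : Measure α}
    [NormedAddCommGroup E] {f g : α → E} (hf : Integrable f μ) (hg : Integrable g μ)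
    (hgf : ∫ x, ‖g x‖ ∂μ ≤ ∫ x, ‖f x‖ ∂μ) :
    ∫ x, ‖f x - g x‖ ∂μ ≤ 2 * ∫ x, ‖f x‖ ∂μ :=
  calc ∫ x, ‖f x - g x‖ ∂μ ≤ ∫ x, (‖f x‖ + ‖g x‖) ∂μ :=
        integral_mono (hf.sub hg).norm (hf.norm.add hg.norm) fun _ => norm_sub_le _ _
    _ = ∫ x, ‖f x‖ ∂μ + ∫ x, ‖g x‖ ∂μ := integral_add hf.norm hg.norm
    _ ≤ 2 * ∫ x, ‖f x‖ ∂μ := by linarith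

theorem integral_mul_exp_mul_Iio {q : ℝ} (hq : 0 < q) (c : ℝ) :
    ∫ x in Iio c, q * Real.exp (q * x) = Real.exp (q * c) := by
  rw [← integral_Iic_eq_integral_Iio, integral_const_mul, integral_exp_mul_Iic hq,
    mul_div_cancel₀ _ hq.ne']

noncomputable def LplusCorrection (q : ℝ) (φ : ℝ → ℂ) (x : ℝ) : ℂ :=
  (if x < 0 then (1 : ℂ) else 0) * q * Real.exp (q * x) *
    ∫ y in x..(-x), (Real.exp (q * |y|) : ℂ) * φ y

noncomputable def LminusCorrection (q : ℝ) (φ : ℝ → ℂ) (x : ℝ) : ℂ :=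
  (if 0 ≤ x then (1 : ℂ) else 0) * q * Real.exp (-(q * x)) *
    ∫ y in (-x)..x, (Real.exp (q * |y|) : ℂ) * φ y

theorem Lplus_eq_sub (q : ℝ) (φ : ℝ → ℂ) : Lplus q φ = φ - LplusCorrection q φ := rfl

theorem Lminus_eq_sub (q : ℝ) (φ : ℝ → ℂ) : Lminus q φ = φ - LminusCorrection q φ := rfl

/-- The region `|y| < -x` encodes both `x < 0` and `y ∈ (x, -x)`; its `y`-slices are the
half-lines `(-∞, -|y|)`. -/
noncomputable def LplusKernel (q : ℝ) (φ : ℝ → ℂ) : ℝ × ℝ → ℂ :=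
  {p : ℝ × ℝ | |p.2| < -p.1}.indicator
    fun p => ((q * Real.exp (q * p.1) : ℝ) : ℂ) * ((Real.exp (q * |p.2|) : ℂ) * φ p.2)

section LplusKernel

variable (q : ℝ) (φ : ℝ → ℂ)

theorem LplusKernel_apply_eq_indicator_Ioo (x y : ℝ) :
    LplusKernel q φ (x, y) = (Ioo x (-x)).indicator
      (fun y => ((q * Real.exp (q * x) : ℝ) : ℂ) * ((Real.exp (q * |y|) : ℂ) * φ y)) y := by
  have : |y| < -x ↔ y ∈ Ioo x (-x) := by rw [abs_lt, neg_neg, mem_Ioo]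
  by_cases h : |y| < -x
  · simp [LplusKernel, h, this.1 h]
  · simp [LplusKernel, h, this.not.1 h]

theorem LplusKernel_apply_eq_indicator_Iio (x y : ℝ) :
    LplusKernel q φ (x, y) = (Iio (-|y|)).indicator
      (fun x => ((q * Real.exp (q * x) : ℝ) : ℂ) * ((Real.exp (q * |y|) : ℂ) * φ y)) x := by
  have : |y| < -x ↔ x ∈ Iio (-|y|) := by rw [mem_Iio, lt_neg]
  by_cases h : |y| < -x
  · simp [LplusKernel, h, this.1 h]
  · simp [LplusKernel, h, this.not.1 h]

theorem LplusCorrection_eq_integral_LplusKernel (x : ℝ) :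
    LplusCorrection q φ x = ∫ y, LplusKernel q φ (x, y) := by
  simp_rw [LplusKernel_apply_eq_indicator_Ioo, integral_indicator measurableSet_Ioo,
    integral_const_mul]
  rcases lt_or_ge x 0 with hx | hx
  · rw [LplusCorrection, if_pos hx, intervalIntegral.integral_of_le (by linarith),
      integral_Ioc_eq_integral_Ioo]
    push_cast
    ring
  · simp [LplusCorrection, not_lt.2 hx]

variable {q}

theorem integrable_LplusKernel_slice (hq : 0 < q) (y : ℝ) :
    Integrable fun x => LplusKernel q φ (x, y) := by
  simp_rw [LplusKernel_apply_eq_indicator_Iio]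
  refine (integrable_indicator_iff measurableSet_Iio).2 (Integrable.mul_const ?_ _)
  exact (((integrableOn_exp_mul_Iic hq _).mono_set Iio_subset_Iic_self).const_mul q).ofReal

theorem integral_norm_LplusKernel_slice (hq : 0 < q) (y : ℝ) :
    ∫ x, ‖LplusKernel q φ (x, y)‖ = ‖φ y‖ := by
  simp_rw [LplusKernel_apply_eq_indicator_Iio, norm_indicator_eq_indicator_norm,
    integral_indicator measurableSet_Iio]
  have hnorm (x : ℝ) : ‖((q * Real.exp (q * x) : ℝ) : ℂ) * ((Real.exp (q * |y|) : ℂ) * φ y)‖ =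
      q * Real.exp (q * x) * (Real.exp (q * |y|) * ‖φ y‖) := by
    rw [norm_mul, norm_mul, Complex.norm_real, Complex.norm_real, Real.norm_of_nonneg (by positivity),
      Real.norm_of_nonneg (by positivity)]
  simp_rw [hnorm]
  rw [integral_mul_const, integral_mul_exp_mul_Iio hq, ← mul_assoc, ← Real.exp_add]
  simp

end LplusKernel

section Correction

variable {q : ℝ} {φ : ℝ → ℂ}

theorem integrable_LplusKernel (hq : 0 < q) (hφ : Integrable φ) :
    Integrable (LplusKernel q φ) (volume.prod volume) := by
  have hmeas : AEStronglyMeasurable (LplusKernel q φ) (volume.prod volume) := by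
    refine AEStronglyMeasurable.indicator ?_ (measurableSet_lt (by fun_prop) (by fun_prop))
    exact (Continuous.aestronglyMeasurable (by fun_prop)).mul
      ((Continuous.aestronglyMeasurable (by fun_prop)).mul hφ.aestronglyMeasurable.comp_snd)
  refine (integrable_prod_iff' hmeas).2 ⟨.of_forall (integrable_LplusKernel_slice φ hq), ?_⟩
  simpa only [integral_norm_LplusKernel_slice φ hq] using hφ.norm

theorem integrable_LplusCorrection_and_integral_norm_le (hq : 0 ≤ q) (hφ : Integrable φ) :
    Integrable (LplusCorrection q φ) ∧ ∫ x, ‖LplusCorrection q φ x‖ ≤ ∫ x, ‖φ x‖ := by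
  rcases hq.eq_or_lt with rfl | hq
  · have : LplusCorrection 0 φ = 0 := funext fun x => by simp [LplusCorrection]
    simpa [this] using integral_nonneg fun x => norm_nonneg (φ x)
  have hK := integrable_LplusKernel hq hφ
  have hcorr : LplusCorrection q φ = fun x => ∫ y, LplusKernel q φ (x, y) :=
    funext (LplusCorrection_eq_integral_LplusKernel q φ)
  refine ⟨hcorr ▸ hK.integral_prod_left, ?_⟩
  calc ∫ x, ‖LplusCorrection q φ x‖ = ∫ x, ‖∫ y, LplusKernel q φ (x, y)‖ := by rw [hcorr]
    _ ≤ ∫ y, ∫ x, ‖LplusKernel q φ (x, y)‖ := integral_norm_integral_le_integral_integral_norm hK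
    _ = ∫ y, ‖φ y‖ := by simp_rw [integral_norm_LplusKernel_slice φ hq]

theorem LminusCorrection_eq_LplusCorrection_neg (q : ℝ) (φ : ℝ → ℂ) (x : ℝ) :
    LminusCorrection q φ x = LplusCorrection q (fun y => φ (-y)) (-x) := by
  have hreflect : ∫ y in (-x)..x, (Real.exp (q * |y|) : ℂ) * φ (-y) =
      ∫ y in (-x)..x, (Real.exp (q * |y|) : ℂ) * φ y := by
    simpa [abs_neg] using intervalIntegral.integral_comp_neg (a := -x) (b := x)
      fun y => (Real.exp (q * |y|) : ℂ) * φ y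
  simp only [LminusCorrection, LplusCorrection, neg_neg, hreflect, neg_lt_zero, mul_neg]
  rcases lt_trichotomy x 0 with hx | rfl | hx
  · simp [hx.not_ge, hx.not_gt]
  · simp
  · simp [hx, hx.le]

theorem integrable_LminusCorrection_and_integral_norm_le (hq : 0 ≤ q) (hφ : Integrable φ) :
    Integrable (LminusCorrection q φ) ∧ ∫ x, ‖LminusCorrection q φ x‖ ≤ ∫ x, ‖φ x‖ := by
  obtain ⟨hint, hle⟩ := integrable_LplusCorrection_and_integral_norm_le hq hφ.comp_neg
  simp_rw [funext (LminusCorrection_eq_LplusCorrection_neg q φ)]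
  refine ⟨hint.comp_neg, ?_⟩
  rwa [integral_neg_eq_self (fun x => ‖LplusCorrection q (fun y => φ (-y)) x‖),
    ← integral_neg_eq_self (fun y => ‖φ y‖)]

end Correction

theorem Lpm_L1_bound (q : ℝ) (hq : 0 ≤ q) (φ : ℝ → ℂ) (hφ : Integrable φ) :
    Integrable (Lplus q φ) ∧ Integrable (Lminus q φ) ∧
    (∫ x : ℝ, ‖Lplus q φ x‖) ≤ 2 * ∫ x : ℝ, ‖φ x‖ ∧
    (∫ x : ℝ, ‖Lminus q φ x‖) ≤ 2 * ∫ x : ℝ, ‖φ x‖ := by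
  obtain ⟨hplus, hplus_le⟩ := integrable_LplusCorrection_and_integral_norm_le hq hφ
  obtain ⟨hminus, hminus_le⟩ := integrable_LminusCorrection_and_integral_norm_le hq hφ
  rw [Lplus_eq_sub, Lminus_eq_sub]
  exact ⟨hφ.sub hplus, hφ.sub hminus, integral_norm_sub_le_two_mul hφ hplus hplus_le,
    integral_norm_sub_le_two_mul hφ hminus hminus_le⟩
end

section
/- Let q ≥ 0. For every φ ∈ L²(ℝ), the functions 𝓛₊[φ] and 𝓛₋[φ] belong to L²(ℝ) and satisfy ‖𝓛₊[φ]‖_{L²} ≤ 3‖φ‖_{L²} and ‖𝓛₋[φ]‖_{L²} ≤ 3‖φ‖_{L²}. -/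
/-!
Write `𝓛₊φ = φ - T₊φ`. For `q ≥ 0` the integral term is dominated pointwise,
`|T₊φ(x)| ≤ ∫ K(x, y) |φ(y)| dy`, by the positive kernel `K(x, y) = q e^{q(x + |y|)}` on
`x < y ≤ -x`. Its integrals in `y` are at most `2` (split `e^{q|y|} ≤ e^{qy} + e^{-qy}` and compare
with exponential tails) and its integrals in `x` at most `1` (the support forces `x ≤ -|y|`), so
Schur's test gives `‖T₊φ‖₂² ≤ 2‖φ‖₂²` and hence `‖𝓛₊φ‖₂ ≤ (1 + √2)‖φ‖₂ ≤ 3‖φ‖₂`.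
The reflection `x ↦ -x` conjugates `𝓛₋` into `𝓛₊`.
-/

open Complex MeasureTheory

open Set Function
open scoped ENNReal

section Schur

variable {α β : Type*} [MeasurableSpace α] [MeasurableSpace β] {μ : Measure α} {ν : Measure β}

theorem ENNReal.sq_lintegral_mul_le {K h : β → ℝ≥0∞} (hK : AEMeasurable K ν)
    (hh : AEMeasurable h ν) :
    (∫⁻ y, K y * h y ∂ν) ^ 2 ≤ (∫⁻ y, K y ∂ν) * ∫⁻ y, K y * h y ^ 2 ∂ν := by
  have hsplit : ∀ y, K y * h y = K y ^ (2⁻¹ : ℝ) * (K y * h y ^ 2) ^ (2⁻¹ : ℝ) := by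
    intro y
    rw [ENNReal.mul_rpow_of_nonneg _ _ (by norm_num), ← mul_assoc,
      ← ENNReal.rpow_add_of_nonneg _ _ (by norm_num) (by norm_num), ← ENNReal.rpow_natCast,
      ← ENNReal.rpow_mul]
    norm_num
  have hholder := ENNReal.lintegral_mul_norm_pow_le hK (hK.mul (hh.pow_const 2))
    (p := 2⁻¹) (q := 2⁻¹) (by norm_num) (by norm_num) (by norm_num)
  calc (∫⁻ y, K y * h y ∂ν) ^ 2
      ≤ ((∫⁻ y, K y ∂ν) ^ (2⁻¹ : ℝ) * (∫⁻ y, K y * h y ^ 2 ∂ν) ^ (2⁻¹ : ℝ)) ^ 2 := by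
        rw [lintegral_congr hsplit]
        gcongr
        exact hholder
    _ = (∫⁻ y, K y ∂ν) * ∫⁻ y, K y * h y ^ 2 ∂ν := by
        simp only [mul_pow, ← ENNReal.rpow_two, ← ENNReal.rpow_mul]
        norm_num

theorem lintegral_sq_lintegral_mul_le_of_schur [SFinite μ] [SFinite ν] {K : α → β → ℝ≥0∞}
    {f : β → ℝ≥0∞} {A B : ℝ≥0∞} (hK : Measurable (uncurry K)) (hf : AEMeasurable f ν)
    (hrow : ∀ x, ∫⁻ y, K x y ∂ν ≤ A) (hcol : ∀ y, ∫⁻ x, K x y ∂μ ≤ B) :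
    ∫⁻ x, (∫⁻ y, K x y * f y ∂ν) ^ 2 ∂μ ≤ A * B * ∫⁻ y, f y ^ 2 ∂ν := by
  have hKf : AEMeasurable (uncurry fun x y ↦ K x y * f y ^ 2) (μ.prod ν) :=
    hK.aemeasurable.mul (hf.pow_const 2).comp_snd
  calc ∫⁻ x, (∫⁻ y, K x y * f y ∂ν) ^ 2 ∂μ
      ≤ ∫⁻ x, A * ∫⁻ y, K x y * f y ^ 2 ∂ν ∂μ := by
        refine lintegral_mono fun x ↦ ?_
        grw [ENNReal.sq_lintegral_mul_le (hK.of_uncurry_left).aemeasurable hf, hrow x]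
    _ = A * ∫⁻ y, (∫⁻ x, K x y ∂μ) * f y ^ 2 ∂ν := by
        rw [lintegral_const_mul'' _ hKf.lintegral_prod_right, lintegral_lintegral_swap hKf]
        simp_rw [lintegral_mul_const'' _ (hK.of_uncurry_right).aemeasurable]
    _ ≤ A * ∫⁻ y, B * f y ^ 2 ∂ν := by
        gcongr with y
        exact hcol y
    _ = A * B * ∫⁻ y, f y ^ 2 ∂ν := by
        rw [lintegral_const_mul'' _ (hf.pow_const 2), mul_assoc]

theorem sq_eLpNorm_two_le_of_schur {E F : Type*} [ENorm E] [TopologicalSpace F]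
    [ContinuousENorm F] [SFinite μ] [SFinite ν] {K : α → β → ℝ≥0∞} {A B : ℝ≥0∞} {g : α → E} {f : β → F}
    (hK : Measurable (uncurry K)) (hf : AEStronglyMeasurable f ν)
    (hrow : ∀ x, ∫⁻ y, K x y ∂ν ≤ A) (hcol : ∀ y, ∫⁻ x, K x y ∂μ ≤ B)
    (hg : ∀ x, ‖g x‖ₑ ≤ ∫⁻ y, K x y * ‖f y‖ₑ ∂ν) :
    eLpNorm g 2 μ ^ 2 ≤ A * B * eLpNorm f 2 ν ^ 2 := by
  have h := eLpNorm_nnreal_pow_eq_lintegral (μ := μ) (f := g) (p := 2) two_ne_zero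
  have h' := eLpNorm_nnreal_pow_eq_lintegral (μ := ν) (f := f) (p := 2) two_ne_zero
  simp only [NNReal.coe_ofNat, ENNReal.rpow_two, ENNReal.coe_ofNat] at h h'
  rw [h, h']
  calc ∫⁻ x, ‖g x‖ₑ ^ 2 ∂μ ≤ ∫⁻ x, (∫⁻ y, K x y * ‖f y‖ₑ ∂ν) ^ 2 ∂μ := by
        gcongr with x
        exact hg x
    _ ≤ A * B * ∫⁻ y, ‖f y‖ₑ ^ 2 ∂ν := lintegral_sq_lintegral_mul_le_of_schur hK hf.enorm hrow hcol

end Schur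

theorem lintegral_Iic_ofReal_mul_exp {q : ℝ} (hq : 0 < q) (c : ℝ) :
    ∫⁻ x in Iic c, ENNReal.ofReal (q * Real.exp (q * (x - c))) = 1 := by
  have hfactor : ∀ x, q * Real.exp (q * (x - c)) = q * Real.exp (-(q * c)) * Real.exp (q * x) :=
    fun x ↦ by rw [mul_sub, sub_eq_add_neg, Real.exp_add]; ring
  simp_rw [hfactor]
  rw [← ofReal_integral_eq_lintegral_ofReal ((integrableOn_exp_mul_Iic hq c).const_mul _)
      (ae_of_all _ fun x ↦ by positivity),
    integral_const_mul, integral_exp_mul_Iic hq, ← ENNReal.ofReal_one]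
  congr 1
  field_simp
  rw [← Real.exp_add, neg_add_cancel, Real.exp_zero]

theorem lintegral_Ioi_ofReal_mul_exp {q : ℝ} (hq : 0 < q) (c : ℝ) :
    ∫⁻ x in Ioi c, ENNReal.ofReal (q * Real.exp (q * (c - x))) = 1 := by
  have hfactor : ∀ x, q * Real.exp (q * (c - x)) = q * Real.exp (q * c) * Real.exp (-q * x) :=
    fun x ↦ by rw [mul_sub, sub_eq_add_neg, Real.exp_add, neg_mul]; ring
  simp_rw [hfactor]
  rw [← ofReal_integral_eq_lintegral_ofReal
      ((integrableOn_exp_mul_Ioi (neg_lt_zero.2 hq) c).const_mul _)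
      (ae_of_all _ fun x ↦ by positivity),
    integral_const_mul, integral_exp_mul_Ioi (neg_lt_zero.2 hq), ← ENNReal.ofReal_one]
  congr 1
  field_simp
  rw [← Real.exp_add, add_neg_cancel, Real.exp_zero]

noncomputable def plusKernel (q x y : ℝ) : ℝ≥0∞ :=
  (Ioc x (-x)).indicator (fun y ↦ ENNReal.ofReal (q * Real.exp (q * (x + |y|)))) y

theorem measurable_plusKernel (q : ℝ) : Measurable (uncurry (plusKernel q)) := by
  have hS : MeasurableSet {p : ℝ × ℝ | p.2 ∈ Ioc p.1 (-p.1)} :=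
    (measurableSet_lt measurable_fst measurable_snd).inter
      (measurableSet_le measurable_snd measurable_fst.neg)
  have hite : uncurry (plusKernel q) = fun p ↦
      if p.2 ∈ Ioc p.1 (-p.1) then ENNReal.ofReal (q * Real.exp (q * (p.1 + |p.2|))) else 0 := by
    ext ⟨x, y⟩
    simp [plusKernel, indicator_apply]
  rw [hite]
  exact Measurable.ite hS (by fun_prop) measurable_const

theorem lintegral_plusKernel_right_le {q : ℝ} (hq : 0 ≤ q) (x : ℝ) :
    ∫⁻ y, plusKernel q x y ≤ 2 := by
  rcases hq.eq_or_lt with rfl | hq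
  · simp [plusKernel]
  have hsplit : ∀ y, ENNReal.ofReal (q * Real.exp (q * (x + |y|))) ≤
      ENNReal.ofReal (q * Real.exp (q * (x - y))) +
        ENNReal.ofReal (q * Real.exp (q * (y - -x))) := fun y ↦ by
    rw [← ENNReal.ofReal_add (by positivity) (by positivity)]
    refine ENNReal.ofReal_le_ofReal ?_
    rcases abs_cases y with ⟨hy, -⟩ | ⟨hy, -⟩
    · have : Real.exp (q * (x + |y|)) = Real.exp (q * (y - -x)) := by rw [hy]; ring_nf
      nlinarith [Real.exp_pos (q * (x - y))]
    · have : Real.exp (q * (x + |y|)) = Real.exp (q * (x - y)) := by rw [hy]; ring_nf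
      nlinarith [Real.exp_pos (q * (y - -x))]
  calc ∫⁻ y, plusKernel q x y
      = ∫⁻ y in Ioc x (-x), ENNReal.ofReal (q * Real.exp (q * (x + |y|))) :=
        lintegral_indicator measurableSet_Ioc _
    _ ≤ (∫⁻ y in Ioc x (-x), ENNReal.ofReal (q * Real.exp (q * (x - y)))) +
          ∫⁻ y in Ioc x (-x), ENNReal.ofReal (q * Real.exp (q * (y - -x))) := by
        rw [← lintegral_add_left (by fun_prop)]
        exact lintegral_mono hsplit
    _ ≤ (∫⁻ y in Ioi x, ENNReal.ofReal (q * Real.exp (q * (x - y)))) +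
          ∫⁻ y in Iic (-x), ENNReal.ofReal (q * Real.exp (q * (y - -x))) := by
        gcongr
        exacts [Ioc_subset_Ioi_self, Ioc_subset_Iic_self]
    _ = 2 := by
        rw [lintegral_Ioi_ofReal_mul_exp hq, lintegral_Iic_ofReal_mul_exp hq, one_add_one_eq_two]

theorem lintegral_plusKernel_left_le {q : ℝ} (hq : 0 ≤ q) (y : ℝ) :
    ∫⁻ x, plusKernel q x y ≤ 1 := by
  rcases hq.eq_or_lt with rfl | hq
  · simp [plusKernel]
  have hsupp : ∀ x, plusKernel q x y ≤
      (Iic (-|y|)).indicator (fun x ↦ ENNReal.ofReal (q * Real.exp (q * (x - -|y|)))) x := by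
    intro x
    by_cases hxy : y ∈ Ioc x (-x)
    · have hx : x ≤ -|y| := by cases abs_cases y <;> linarith [hxy.1, hxy.2]
      simp [plusKernel, indicator_of_mem hxy, indicator_of_mem (mem_Iic.2 hx)]
    · simp [plusKernel, indicator_of_notMem hxy]
  calc ∫⁻ x, plusKernel q x y
      ≤ ∫⁻ x, (Iic (-|y|)).indicator (fun x ↦ ENNReal.ofReal (q * Real.exp (q * (x - -|y|)))) x :=
        lintegral_mono hsupp
    _ = 1 := by rw [lintegral_indicator measurableSet_Iic, lintegral_Iic_ofReal_mul_exp hq]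

theorem Complex.enorm_ofReal_of_nonneg {r : ℝ} (hr : 0 ≤ r) : ‖(r : ℂ)‖ₑ = ENNReal.ofReal r := by
  rw [← ofReal_norm, Complex.norm_real, Real.norm_of_nonneg hr]

noncomputable def Tplus (q : ℝ) (φ : ℝ → ℂ) (x : ℝ) : ℂ :=
  (if x < 0 then (1 : ℂ) else 0) * q * Real.exp (q * x) *
    ∫ y in x..(-x), (Real.exp (q * |y|) : ℂ) * φ y

theorem Lplus_eq_sub_Tplus (q : ℝ) (φ : ℝ → ℂ) : Lplus q φ = φ - Tplus q φ := rfl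

theorem enorm_Tplus_le {q : ℝ} (hq : 0 ≤ q) (φ : ℝ → ℂ) (x : ℝ) :
    ‖Tplus q φ x‖ₑ ≤ ∫⁻ y, plusKernel q x y * ‖φ y‖ₑ := by
  by_cases hx : x < 0
  swap
  · simp [Tplus, hx]
  have hT : Tplus q φ x = ((q * Real.exp (q * x) : ℝ) : ℂ) *
      ∫ y in Ioc x (-x), (Real.exp (q * |y|) : ℂ) * φ y := by
    rw [Tplus, if_pos hx, intervalIntegral.integral_of_le (by linarith)]
    push_cast
    ring
  have hfactor : ∀ y, ENNReal.ofReal (q * Real.exp (q * (x + |y|))) * ‖φ y‖ₑ =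
      ENNReal.ofReal (q * Real.exp (q * x)) * ‖(Real.exp (q * |y|) : ℂ) * φ y‖ₑ := fun y ↦ by
    rw [enorm_mul, Complex.enorm_ofReal_of_nonneg (Real.exp_pos _).le, ← mul_assoc,
      ← ENNReal.ofReal_mul (by positivity), mul_assoc, ← Real.exp_add, mul_add]
  have hK : ∀ y, plusKernel q x y * ‖φ y‖ₑ = (Ioc x (-x)).indicator
      (fun y ↦ ENNReal.ofReal (q * Real.exp (q * x)) * ‖(Real.exp (q * |y|) : ℂ) * φ y‖ₑ) y := by
    intro y
    simp_rw [plusKernel, ← indicator_mul_left (g := fun y ↦ ‖φ y‖ₑ), hfactor]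
  rw [hT, enorm_mul, Complex.enorm_ofReal_of_nonneg (by positivity), lintegral_congr hK,
    lintegral_indicator measurableSet_Ioc, lintegral_const_mul' _ _ ENNReal.ofReal_ne_top]
  gcongr
  exact enorm_integral_le_lintegral_enorm _

theorem continuous_intervalIntegral_neg {g : ℝ → ℂ} (hg : LocallyIntegrable g volume) :
    Continuous fun x ↦ ∫ y in x..(-x), g y := by
  have hint : ∀ a b : ℝ, IntervalIntegrable g volume a b := fun a b ↦
    (hg.integrableOn_isCompact isCompact_uIcc).intervalIntegrable
  have hprim := intervalIntegral.continuous_primitive hint 0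
  refine ((hprim.comp continuous_neg).sub hprim).congr fun x ↦ ?_
  exact intervalIntegral.integral_interval_sub_left (hint 0 (-x)) (hint 0 x)

theorem aestronglyMeasurable_Tplus (q : ℝ) {φ : ℝ → ℂ} (hφ : LocallyIntegrable φ volume) :
    AEStronglyMeasurable (Tplus q φ) volume := by
  have hcont : Continuous fun x ↦ ∫ y in x..(-x), (Real.exp (q * |y|) : ℂ) * φ y :=
    continuous_intervalIntegral_neg (hφ.continuous_mul (by fun_prop))
  have hind : Measurable fun x : ℝ ↦ if x < 0 then (1 : ℂ) else 0 :=
    Measurable.ite measurableSet_Iio measurable_const measurable_const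
  have hexp : Measurable fun x : ℝ ↦ (Real.exp (q * x) : ℂ) := by fun_prop
  exact (((hind.mul_const _).mul hexp).mul hcont.measurable).aestronglyMeasurable

theorem eLpNorm_Tplus_le {q : ℝ} (hq : 0 ≤ q) {φ : ℝ → ℂ} (hφ : AEStronglyMeasurable φ volume) :
    eLpNorm (Tplus q φ) 2 volume ≤ 2 * eLpNorm φ 2 volume := by
  have hsq := sq_eLpNorm_two_le_of_schur (measurable_plusKernel q) hφ
    (lintegral_plusKernel_right_le hq) (lintegral_plusKernel_left_le hq) (enorm_Tplus_le hq φ)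
  refine (ENNReal.pow_le_pow_left_iff two_ne_zero).1 (hsq.trans ?_)
  rw [mul_pow, mul_one]
  gcongr
  norm_num

theorem memLp_Lplus_and_eLpNorm_le {q : ℝ} (hq : 0 ≤ q) {φ : ℝ → ℂ} (hφ : MemLp φ 2 volume) :
    MemLp (Lplus q φ) 2 volume ∧ eLpNorm (Lplus q φ) 2 volume ≤ 3 * eLpNorm φ 2 volume := by
  have hT := eLpNorm_Tplus_le hq hφ.1
  have hTmem : MemLp (Tplus q φ) 2 volume :=
    ⟨aestronglyMeasurable_Tplus q (hφ.locallyIntegrable one_le_two),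
      hT.trans_lt (ENNReal.mul_lt_top (by norm_num) hφ.2)⟩
  refine ⟨Lplus_eq_sub_Tplus q φ ▸ hφ.sub hTmem, ?_⟩
  calc eLpNorm (Lplus q φ) 2 volume
      ≤ eLpNorm φ 2 volume + eLpNorm (Tplus q φ) 2 volume :=
        Lplus_eq_sub_Tplus q φ ▸ eLpNorm_sub_le hφ.1 hTmem.1 one_le_two
    _ ≤ eLpNorm φ 2 volume + 2 * eLpNorm φ 2 volume := by gcongr
    _ = 3 * eLpNorm φ 2 volume := by ring

theorem Lminus_eq_Lplus_comp_neg (q : ℝ) (φ : ℝ → ℂ) :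
    Lminus q φ = Lplus q (φ ∘ Neg.neg) ∘ Neg.neg := by
  funext x
  have hint : ∫ y in (-x)..x, (Real.exp (q * |y|) : ℂ) * φ (-y) =
      ∫ y in (-x)..x, (Real.exp (q * |y|) : ℂ) * φ y := by
    simpa [abs_neg] using
      intervalIntegral.integral_comp_neg (fun y ↦ (Real.exp (q * |y|) : ℂ) * φ y) (a := -x) (b := x)
  simp only [Lminus, Lplus, comp_apply, neg_neg, hint, neg_lt_zero, mul_neg]
  rcases lt_or_ge x 0 with hx | hx
  · simp [hx.not_ge, hx.not_gt]
  rcases hx.eq_or_lt with rfl | hx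
  · simp
  · simp [hx, hx.le]

theorem memLp_Lminus_and_eLpNorm_le {q : ℝ} (hq : 0 ≤ q) {φ : ℝ → ℂ} (hφ : MemLp φ 2 volume) :
    MemLp (Lminus q φ) 2 volume ∧ eLpNorm (Lminus q φ) 2 volume ≤ 3 * eLpNorm φ 2 volume := by
  have hneg : MeasurePreserving (Neg.neg : ℝ → ℝ) volume volume := Measure.measurePreserving_neg _
  obtain ⟨hmem, hle⟩ := memLp_Lplus_and_eLpNorm_le hq (hφ.comp_measurePreserving hneg)
  rw [Lminus_eq_Lplus_comp_neg]
  refine ⟨hmem.comp_measurePreserving hneg, ?_⟩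
  rwa [eLpNorm_comp_measurePreserving hmem.1 hneg, ← eLpNorm_comp_measurePreserving hφ.1 hneg]

theorem Lpm_L2_bound (q : ℝ) (hq : 0 ≤ q) (φ : ℝ → ℂ) (hφ : MemLp φ 2 (volume : Measure ℝ)) :
    MemLp (Lplus q φ) 2 (volume : Measure ℝ) ∧
    MemLp (Lminus q φ) 2 (volume : Measure ℝ) ∧
    eLpNorm (Lplus q φ) 2 volume ≤ 3 * eLpNorm φ 2 volume ∧
    eLpNorm (Lminus q φ) 2 volume ≤ 3 * eLpNorm φ 2 volume :=
  have hplus := memLp_Lplus_and_eLpNorm_le hq hφ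
  have hminus := memLp_Lminus_and_eLpNorm_le hq hφ
  ⟨hplus.1, hminus.1, hplus.2, hminus.2⟩
end

section
/- Let q > 0, y < 0, and let f : ℝ → ℂ be measurable, locally integrable, and satisfy ∫_0^{∞} e^{−qw}|f(w)| dw < ∞. Then e^{qy} ∫_y^0 e^{−2qz} (∫_{−z}^{∞} e^{−qw} f(w) dw) dz = e^{qy} ∫_0^{−y} e^{2qz} (∫_{z}^{∞} e^{−qw} f(w) dw) dz = (1/(2q)) e^{qy} ∫_0^{−y} e^{qz} f(z) dz + (1/(2q)) e^{−qy} ∫_{−y}^{∞} e^{−qz} f(z) dz − (1/(2q)) e^{qy} ∫_0^{∞} e^{−qz} f(z) dz. -/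
/-!
Reflecting `z ↦ -z` turns the first iterated integral into the second. For the closed form put
`g w = e^{-qw} f w`, integrable on `[0, ∞)`, and `T = -y`. Fubini on `{0 < z ≤ T, z ≤ w}` turns
`∫_0^T e^{2qz} ∫_z^∞ g` into `∫_0^∞ (∫_0^{min T w} e^{2qz} dz) g(w) dw`; the inner integral is
`(e^{2q min T w} - 1) / (2q)`, and splitting the outer one at `T` gives the three terms, using
`e^{2qw} g(w) = e^{qw} f(w)`.
-/

open Complex MeasureTheory Set

lemma integral_exp_mul {c : ℝ} (hc : c ≠ 0) (a b : ℝ) :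
    ∫ x in a..b, Real.exp (c * x) = (Real.exp (c * b) - Real.exp (c * a)) / c := by
  rw [intervalIntegral.integral_comp_mul_left (fun x => Real.exp x) hc, integral_exp,
    smul_eq_mul, inv_mul_eq_div]

lemma integrableOn_ofReal_mul_of_norm {ρ : ℝ → ℝ} {f : ℝ → ℂ} {s : Set ℝ} (hρ : Continuous ρ)
    (hρ_nonneg : ∀ w, 0 ≤ ρ w) (hf : AEStronglyMeasurable f)
    (h : IntegrableOn (fun w => ρ w * ‖f w‖) s) :
    IntegrableOn (fun w => (ρ w : ℂ) * f w) s :=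
  h.mono' ((continuous_ofReal.comp hρ).aestronglyMeasurable.mul hf).restrict
    (Filter.Eventually.of_forall fun w => by
      rw [norm_mul, Complex.norm_real, Real.norm_of_nonneg (hρ_nonneg w)])

section TailIntegral

variable {E : Type*} [NormedAddCommGroup E] [NormedSpace ℝ E] {φ : ℝ → ℝ} {g : ℝ → E} {a b : ℝ}

lemma integrable_indicator_le_smul_prod (hφ : IntegrableOn φ (Ioc a b))
    (hg : IntegrableOn g (Ioi a)) :
    Integrable ({p : ℝ × ℝ | p.1 ≤ p.2}.indicator fun p => φ p.1 • g p.2)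
      ((volume.restrict (Ioc a b)).prod (volume.restrict (Ioi a))) :=
  (hφ.smul_prod hg).indicator (measurableSet_le measurable_fst measurable_snd)

lemma integral_Ioi_indicator_le_smul {z : ℝ} (hz : a < z) :
    ∫ w in Ioi a, {p : ℝ × ℝ | p.1 ≤ p.2}.indicator (fun p => φ p.1 • g p.2) (z, w)
      = φ z • ∫ w in Ici z, g w := by
  have hsection : ∀ w, {p : ℝ × ℝ | p.1 ≤ p.2}.indicator (fun p => φ p.1 • g p.2) (z, w)
      = (Ici z).indicator (fun w => φ z • g w) w := fun w => by
    by_cases h : z ≤ w <;> simp [h]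
  simp_rw [hsection]
  rw [integral_indicator measurableSet_Ici, Measure.restrict_restrict measurableSet_Ici,
    inter_eq_self_of_subset_left (Ici_subset_Ioi.mpr hz), integral_smul]

variable [CompleteSpace E]

lemma integral_Ioc_indicator_le_smul (w : ℝ) :
    ∫ z in Ioc a b, {p : ℝ × ℝ | p.1 ≤ p.2}.indicator (fun p => φ p.1 • g p.2) (z, w)
      = (∫ z in Ioc a (min b w), φ z) • g w := by
  have hsection : ∀ z, {p : ℝ × ℝ | p.1 ≤ p.2}.indicator (fun p => φ p.1 • g p.2) (z, w)
      = (Iic w).indicator (fun z => φ z • g w) z := fun z => by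
    by_cases h : z ≤ w <;> simp [h]
  simp_rw [hsection]
  rw [integral_indicator measurableSet_Iic, Measure.restrict_restrict measurableSet_Iic,
    inter_comm, Ioc_inter_Iic, integral_smul_const]

lemma integrableOn_integral_Ioc_min_smul (hφ : IntegrableOn φ (Ioc a b))
    (hg : IntegrableOn g (Ioi a)) :
    IntegrableOn (fun w => (∫ z in Ioc a (min b w), φ z) • g w) (Ioi a) := by
  simpa only [IntegrableOn, integral_Ioc_indicator_le_smul] using
    (integrable_indicator_le_smul_prod hφ hg).integral_prod_right

lemma setIntegral_Ioc_smul_integral_Ici (hφ : IntegrableOn φ (Ioc a b))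
    (hg : IntegrableOn g (Ioi a)) :
    ∫ z in Ioc a b, φ z • ∫ w in Ici z, g w
      = ∫ w in Ioi a, (∫ z in Ioc a (min b w), φ z) • g w := by
  rw [← setIntegral_congr_fun measurableSet_Ioc fun z hz => integral_Ioi_indicator_le_smul hz.1,
    integral_integral_swap (f := fun z w => {p : ℝ × ℝ | p.1 ≤ p.2}.indicator
      (fun p => φ p.1 • g p.2) (z, w)) (integrable_indicator_le_smul_prod hφ hg)]
  simp only [integral_Ioc_indicator_le_smul]

/- Integration by parts against the tail `z ↦ ∫_z^∞ g`, done by Fubini because the tail need not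
be differentiable. -/
theorem intervalIntegral_smul_integral_Ici (hab : a ≤ b) (hφ : IntegrableOn φ (Ioc a b))
    (hg : IntegrableOn g (Ioi a)) :
    ∫ z in a..b, φ z • ∫ w in Ici z, g w
      = (∫ w in a..b, (∫ z in a..w, φ z) • g w) + (∫ z in a..b, φ z) • ∫ w in Ici b, g w := by
  have hint := integrableOn_integral_Ioc_min_smul hφ hg
  have head : ∫ w in a..b, (∫ z in Ioc a (min b w), φ z) • g w
      = ∫ w in a..b, (∫ z in a..w, φ z) • g w := by
    refine intervalIntegral.integral_congr fun w hw => ?_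
    rw [uIcc_of_le hab] at hw
    simp only [min_eq_right hw.2, intervalIntegral.integral_of_le hw.1]
  have tail : ∫ w in Ioi b, (∫ z in Ioc a (min b w), φ z) • g w
      = (∫ z in a..b, φ z) • ∫ w in Ici b, g w := by
    rw [integral_Ici_eq_integral_Ioi, ← integral_smul]
    refine setIntegral_congr_fun measurableSet_Ioi fun w hw => ?_
    rw [min_eq_left (mem_Ioi.mp hw).le, intervalIntegral.integral_of_le hab]
  rw [intervalIntegral.integral_of_le hab, setIntegral_Ioc_smul_integral_Ici hφ hg,
    ← intervalIntegral.integral_interval_add_Ioi hint (hint.mono_set (Ioi_subset_Ioi hab)),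
    head, tail]

lemma intervalIntegral_exp_mul_smul_integral_Ici {c : ℝ} (hc : c ≠ 0) (hab : a ≤ b)
    (hg : IntegrableOn g (Ioi a)) :
    ∫ z in a..b, Real.exp (c * z) • ∫ w in Ici z, g w
      = c⁻¹ • ((∫ w in a..b, Real.exp (c * w) • g w) + Real.exp (c * b) • (∫ w in Ici b, g w)
          - Real.exp (c * a) • ∫ w in Ici a, g w) := by
  have hg_ab : IntervalIntegrable g volume a b :=
    (intervalIntegrable_iff_integrableOn_Ioc_of_le hab).mpr (hg.mono_set Ioc_subset_Ioi_self)
  have hexp_g : IntervalIntegrable (fun w => Real.exp (c * w) • g w) volume a b :=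
    hg_ab.continuousOn_smul (by fun_prop)
  have head : ∫ w in a..b, ((Real.exp (c * w) - Real.exp (c * a)) / c) • g w
      = c⁻¹ • ((∫ w in a..b, Real.exp (c * w) • g w) - Real.exp (c * a) • ∫ w in a..b, g w) := by
    have hconst_g : IntervalIntegrable (fun w => Real.exp (c * a) • g w) volume a b :=
      hg_ab.smul _
    rw [← intervalIntegral.integral_smul, ← intervalIntegral.integral_sub hexp_g hconst_g,
      ← intervalIntegral.integral_smul]
    refine intervalIntegral.integral_congr fun w _ => ?_
    simp only [div_eq_inv_mul, mul_smul, sub_smul, smul_sub]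
  rw [intervalIntegral_smul_integral_Ici hab (by fun_prop : Continuous _).integrableOn_Ioc hg,
    integral_Ici_eq_integral_Ioi, integral_Ici_eq_integral_Ioi,
    ← intervalIntegral.integral_interval_add_Ioi hg (hg.mono_set (Ioi_subset_Ioi hab))]
  simp only [integral_exp_mul hc, head]
  module

end TailIntegral

theorem iterated_exp_integral_pos_general (q y : ℝ) (hq : 0 < q) (hy : y < 0)
    (f : ℝ → ℂ) (hmeas : Measurable f)
    (hint : IntegrableOn (fun w : ℝ => Real.exp (-(q * w)) * ‖f w‖) (Set.Ici 0)) :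
    (((Real.exp (q * y) : ℝ) : ℂ) *
        ∫ z in y..0, ((Real.exp (-(2 * q * z)) : ℝ) : ℂ) *
          ∫ w in Set.Ici (-z), ((Real.exp (-(q * w)) : ℝ) : ℂ) * f w)
      = ((Real.exp (q * y) : ℝ) : ℂ) *
          ∫ z in (0 : ℝ)..(-y), ((Real.exp (2 * q * z) : ℝ) : ℂ) *
            ∫ w in Set.Ici z, ((Real.exp (-(q * w)) : ℝ) : ℂ) * f w ∧
    (((Real.exp (q * y) : ℝ) : ℂ) *
        ∫ z in y..0, ((Real.exp (-(2 * q * z)) : ℝ) : ℂ) *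
          ∫ w in Set.Ici (-z), ((Real.exp (-(q * w)) : ℝ) : ℂ) * f w)
      = ((1 / (2 * q) * Real.exp (q * y) : ℝ) : ℂ) *
          (∫ z in (0 : ℝ)..(-y), ((Real.exp (q * z) : ℝ) : ℂ) * f z)
        + ((1 / (2 * q) * Real.exp (-(q * y)) : ℝ) : ℂ) *
          (∫ z in Set.Ici (-y), ((Real.exp (-(q * z)) : ℝ) : ℂ) * f z)
        - ((1 / (2 * q) * Real.exp (q * y) : ℝ) : ℂ) *
          (∫ z in Set.Ici (0 : ℝ), ((Real.exp (-(q * z)) : ℝ) : ℂ) * f z) := by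
  set g : ℝ → ℂ := fun w => ((Real.exp (-(q * w)) : ℝ) : ℂ) * f w
  have hg : IntegrableOn g (Ioi 0) :=
    (integrableOn_ofReal_mul_of_norm (by fun_prop) (fun w => (Real.exp_pos _).le)
      hmeas.aestronglyMeasurable hint).mono_set Ioi_subset_Ici_self
  have reflect : ∫ z in y..0, ((Real.exp (-(2 * q * z)) : ℝ) : ℂ) * ∫ w in Ici (-z), g w
      = ∫ z in (0 : ℝ)..(-y), ((Real.exp (2 * q * z) : ℝ) : ℂ) * ∫ w in Ici z, g w := by
    simpa only [neg_zero, mul_neg] using intervalIntegral.integral_comp_neg (a := y) (b := 0)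
      fun z => ((Real.exp (2 * q * z) : ℝ) : ℂ) * ∫ w in Ici z, g w
  have reweight : ∫ w in (0 : ℝ)..(-y), Real.exp (2 * q * w) • g w
      = ∫ w in (0 : ℝ)..(-y), ((Real.exp (q * w) : ℝ) : ℂ) * f w := by
    refine intervalIntegral.integral_congr fun w _ => ?_
    rw [Complex.real_smul, ← mul_assoc, ← Complex.ofReal_mul, ← Real.exp_add]
    ring_nf
  have closed_form := intervalIntegral_exp_mul_smul_integral_Ici (by positivity : 2 * q ≠ 0)
    (neg_nonneg.mpr hy.le) hg
  rw [reweight] at closed_form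
  simp only [mul_zero, Real.exp_zero, one_smul, Complex.real_smul] at closed_form
  have hexp : Real.exp (-(q * y)) = Real.exp (2 * q * -y) * Real.exp (q * y) := by
    rw [← Real.exp_add]; ring_nf
  refine ⟨by rw [reflect], ?_⟩
  rw [reflect, closed_form, hexp]
  push_cast
  ring

theorem iterated_exp_integral_pos (q y : ℝ) (hq : 0 < q) (hy : y < 0)
    (f : ℝ → ℂ) (hmeas : Measurable f) (hloc : LocallyIntegrable f)
    (hint : IntegrableOn (fun w : ℝ => Real.exp (-(q * w)) * ‖f w‖) (Set.Ici 0)) :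
    (((Real.exp (q * y) : ℝ) : ℂ) *
        ∫ z in y..0, ((Real.exp (-(2 * q * z)) : ℝ) : ℂ) *
          ∫ w in Set.Ici (-z), ((Real.exp (-(q * w)) : ℝ) : ℂ) * f w)
      = ((Real.exp (q * y) : ℝ) : ℂ) *
          ∫ z in (0 : ℝ)..(-y), ((Real.exp (2 * q * z) : ℝ) : ℂ) *
            ∫ w in Set.Ici z, ((Real.exp (-(q * w)) : ℝ) : ℂ) * f w ∧
    (((Real.exp (q * y) : ℝ) : ℂ) *
        ∫ z in y..0, ((Real.exp (-(2 * q * z)) : ℝ) : ℂ) *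
          ∫ w in Set.Ici (-z), ((Real.exp (-(q * w)) : ℝ) : ℂ) * f w)
      = ((1 / (2 * q) * Real.exp (q * y) : ℝ) : ℂ) *
          (∫ z in (0 : ℝ)..(-y), ((Real.exp (q * z) : ℝ) : ℂ) * f z)
        + ((1 / (2 * q) * Real.exp (-(q * y)) : ℝ) : ℂ) *
          (∫ z in Set.Ici (-y), ((Real.exp (-(q * z)) : ℝ) : ℂ) * f z)
        - ((1 / (2 * q) * Real.exp (q * y) : ℝ) : ℂ) *
          (∫ z in Set.Ici (0 : ℝ), ((Real.exp (-(q * z)) : ℝ) : ℂ) * f z) :=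
  iterated_exp_integral_pos_general q y hq hy f hmeas hint
end
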